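/- Define the symmetric-gradient distortion on the positive orthant of ℝ³ by f(σ₁,σ₂,σ₃) = (1/2)·∑ⱼ₌₁³ σⱼ² − log(σ₁σ₂σ₃), and its symmetrization f^Sym(σ) = (1/2)·f(σ) + (1/2)·(σ₁σ₂σ₃)·f(1/σ₁,1/σ₂,1/σ₃). Then for every t > 0, f^Sym(t,t,t) = (3/4)·t² − (3/2)·log t + (3/4)·t + (3/2)·t³·log t; in particular f^Sym(1,1,1) = 3/2 while f^Sym(3/5, 3/5, 3/5) < 3/2. Hence (1,1,1) is not a minimizer of f^Sym over the positive orthant, so the symmetrized symmetric-gradient energy does not favor isometry. -/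

import Mathlib

/-!
Along the diagonal, `t ↦ f^Sym(t,t,t)` has derivative `9/4` at `t = 1`: the weight `σ₁σ₂σ₃`
in front of the reflected term destroys the criticality of `(1,1,1)`, so shrinking the
identity uniformly lowers the energy. The point `t = 3/5` is an explicit witness, certified
by an elementary upper bound on `log (5/3)`.
-/

/-- The symmetric-gradient distortion in singular values (3D). -/
noncomputable def fSG (a b c : ℝ) : ℝ :=
  (1/2) * (a^2 + b^2 + c^2) - Real.log (a * b * c)

/-- The symmetrized symmetric-gradient distortion. -/
noncomputable def fSymSG (a b c : ℝ) : ℝ :=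
  (1/2) * fSG a b c + (1/2) * (a * b * c) * fSG a⁻¹ b⁻¹ c⁻¹

open Real

theorem fSymSG_eq (a b c : ℝ) :
    fSymSG a b c = (1/4) * (a^2 + b^2 + c^2) + (a * b * c / 4) * (a⁻¹^2 + b⁻¹^2 + c⁻¹^2)
      + ((a * b * c - 1) / 2) * log (a * b * c) := by
  rw [fSymSG, fSG, fSG, ← mul_inv, ← mul_inv, log_inv]
  ring

theorem fSymSG_diag (t : ℝ) :
    fSymSG t t t = (3/4) * t^2 - (3/2) * log t + (3/4) * t + (3/2) * t^3 * log t := by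
  have hcube : t^3 * t⁻¹^2 = t := by
    rcases eq_or_ne t 0 with rfl | ht
    · simp
    · field_simp
  rw [fSymSG_eq, show t * t * t = t^3 by ring, log_pow]
  linear_combination (3/4) * hcube

theorem log_five_div_three_lt : log (5/3) < 7/12 := by
  -- `log x ≤ x - 1` at `x = 5/3` only gives `2/3`, which is too weak for the witness below.
  have hsplit : log (5/3) = log (5/4) + log (4/3) := by
    rw [← log_mul (by norm_num) (by norm_num)]; norm_num
  have h₁ : log (5/4 : ℝ) < 5/4 - 1 := log_lt_sub_one_of_pos (by norm_num) (by norm_num)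
  have h₂ : log (4/3 : ℝ) ≤ 4/3 - 1 := log_le_sub_one_of_pos (by norm_num)
  linarith

/-- On the diagonal
`f^Sym(t,t,t) = (3/4)t² − (3/2)log t + (3/4)t + (3/2)t³ log t`; in particular
`f^Sym(1,1,1) = 3/2` while `f^Sym(3/5,3/5,3/5) < 3/2`, so `(1,1,1)` is not a
minimizer: the symmetrized symmetric-gradient energy does not favor
isometry. -/
theorem statement_13 :
    (∀ t : ℝ, 0 < t → fSymSG t t t =
      (3/4) * t^2 - (3/2) * Real.log t + (3/4) * t + (3/2) * t^3 * Real.log t) ∧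
    fSymSG 1 1 1 = 3/2 ∧
    fSymSG (3/5) (3/5) (3/5) < 3/2 ∧
    (∃ a b c : ℝ, 0 < a ∧ 0 < b ∧ 0 < c ∧ fSymSG a b c < fSymSG 1 1 1) := by
  have h_one : fSymSG 1 1 1 = 3/2 := by
    rw [fSymSG_diag]; norm_num
  have h_three_fifths : fSymSG (3/5) (3/5) (3/5) < 3/2 := by
    have hlog : log (3/5 : ℝ) = -log (5/3) := by
      rw [← log_inv]; norm_num
    rw [fSymSG_diag, hlog]
    linarith [log_five_div_three_lt]
  refine ⟨fun t _ => fSymSG_diag t, h_one, h_three_fifths, 3/5, 3/5, 3/5, ?_⟩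
  exact ⟨by norm_num, by norm_num, by norm_num, h_one ▸ h_three_fifths⟩
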